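/- Let k be a commutative ring, A a unital associative k-algebra, M an (A,A)-bimodule over k, and D : A → M an (A,A)-bimodule k-derivation (a k-linear map with D(a·b) = a•D(b) + D(a)•b for all a, b ∈ A). Then there exists a unique map f : ker μ → M that is k-linear, left A-linear and right A-linear (for the first-factor left action and second-factor right action of A on A ⊗_k A, restricted to ker μ) such that f(1 ⊗ a − a ⊗ 1) = D(a) for every a ∈ A. Moreover f is given on elements Σᵢ aᵢ ⊗ bᵢ ∈ ker μ by f(Σᵢ aᵢ ⊗ bᵢ) = Σᵢ aᵢ•D(bᵢ). (Universal property of Ω¹(A/k): Hom over the bimodule structure from Ω¹(A/k) to M is naturally isomorphic to the k-module of derivations Der_k(A,M).) -/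

import Mathlib

/-!
Every element of `A ⊗ A` is congruent modulo `A ⊗ 1` to a left `A`-combination of the elements
`d b = 1 ⊗ b - b ⊗ 1`, namely `a ⊗ b - ab ⊗ 1 = a • d b`; the projection `x ↦ x - μ x ⊗ 1` onto
`ker μ` makes this precise. So a left `A`-linear `f` with `f ∘ d = D` is forced to be
`a ⊗ b ↦ a • D b` on `ker μ`, and the Leibniz rule is exactly what makes this map right
`A`-linear there.
-/

open scoped TensorProduct

def IsOmegaLift (k : Type*) [CommRing k] (A : Type*) [Ring A] [Algebra k A]
    (M : Type*) [AddCommGroup M] [Module k M] [Module A M] [Module Aᵐᵒᵖ M]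
    (D : A → M) (f : (LinearMap.ker (LinearMap.mul' k A)) →ₗ[k] M) : Prop :=
  (∀ (a : A) (x : LinearMap.ker (LinearMap.mul' k A))
      (hx : a • (x : A ⊗[k] A) ∈ LinearMap.ker (LinearMap.mul' k A)),
    f ⟨a • (x : A ⊗[k] A), hx⟩ = a • f x) ∧
  (∀ (b : A) (x : LinearMap.ker (LinearMap.mul' k A))
      (hx : LinearMap.lTensor A (LinearMap.mulRight k b) (x : A ⊗[k] A)
              ∈ LinearMap.ker (LinearMap.mul' k A)),
    f ⟨LinearMap.lTensor A (LinearMap.mulRight k b) (x : A ⊗[k] A), hx⟩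
      = MulOpposite.op b • f x) ∧
  (∀ (a : A) (ha : ((1 : A) ⊗ₜ[k] a - a ⊗ₜ[k] (1 : A))
              ∈ LinearMap.ker (LinearMap.mul' k A)),
    f ⟨(1 : A) ⊗ₜ[k] a - a ⊗ₜ[k] (1 : A), ha⟩ = D a)

namespace KaehlerBimodule

variable (k : Type*) [CommRing k] (A : Type*) [Ring A] [Algebra k A]

/-- The projection `x ↦ x - μ x ⊗ 1` of `A ⊗ A` onto `ker μ`. -/
noncomputable def kerMulProj : A ⊗[k] A →ₗ[k] LinearMap.ker (LinearMap.mul' k A) :=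
  (LinearMap.id - (TensorProduct.mk k A A).flip 1 ∘ₗ LinearMap.mul' k A).codRestrict _
    fun x => by simp

variable {k A}

lemma coe_kerMulProj (x : A ⊗[k] A) :
    (kerMulProj k A x : A ⊗[k] A) = x - LinearMap.mul' k A x ⊗ₜ 1 :=
  rfl

lemma kerMulProj_apply_of_mem {x : A ⊗[k] A} (hx : x ∈ LinearMap.ker (LinearMap.mul' k A)) :
    kerMulProj k A x = ⟨x, hx⟩ :=
  Subtype.ext <| by simp [coe_kerMulProj, LinearMap.mem_ker.mp hx]

lemma coe_kerMulProj_tmul (a b : A) :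
    (kerMulProj k A (a ⊗ₜ b) : A ⊗[k] A) = a • ((1 : A) ⊗ₜ[k] b - b ⊗ₜ[k] (1 : A)) := by
  simp [coe_kerMulProj, smul_sub, TensorProduct.smul_tmul']

lemma map_one_eq_zero_of_leibniz {M : Type*} [AddCommGroup M] [Module k M] [Module A M]
    [Module Aᵐᵒᵖ M] (D : A →ₗ[k] M)
    (hD : ∀ a b : A, D (a * b) = a • D b + MulOpposite.op b • D a) : D 1 = 0 := by
  simpa using hD 1 1

variable {M : Type*} [AddCommGroup M] [Module k M] [Module A M] [IsScalarTower k A M]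

noncomputable def derivationTensorMap (D : A →ₗ[k] M) : A ⊗[k] A →ₗ[k] M :=
  TensorProduct.lift <| LinearMap.mk₂ k (fun a b => a • D b)
    (fun a a' b => add_smul a a' (D b))
    (fun c a b => smul_assoc c a (D b))
    (fun a b b' => by rw [map_add, smul_add])
    (fun c a b => by rw [map_smul, smul_algebra_smul_comm])

variable (D : A →ₗ[k] M)

@[simp]
lemma derivationTensorMap_tmul (a b : A) : derivationTensorMap D (a ⊗ₜ b) = a • D b := rfl

lemma derivationTensorMap_smul (a : A) (x : A ⊗[k] A) :
    derivationTensorMap D (a • x) = a • derivationTensorMap D x := by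
  induction x using TensorProduct.induction_on with
  | zero => simp
  | tmul u v => simp [TensorProduct.smul_tmul', mul_smul]
  | add x y hx hy => rw [smul_add, map_add, hx, hy, map_add, smul_add]

variable [Module Aᵐᵒᵖ M] [SMulCommClass A Aᵐᵒᵖ M]

/-- The defect `μ x • D b` vanishes on `ker μ`. -/
lemma derivationTensorMap_lTensor_mulRight
    (hD : ∀ a b : A, D (a * b) = a • D b + MulOpposite.op b • D a) (b : A) (x : A ⊗[k] A) :
    derivationTensorMap D (LinearMap.lTensor A (LinearMap.mulRight k b) x)
      = MulOpposite.op b • derivationTensorMap D x + LinearMap.mul' k A x • D b := by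
  induction x using TensorProduct.induction_on with
  | zero => simp
  | tmul u v =>
    simp only [LinearMap.lTensor_tmul, LinearMap.mulRight_apply, derivationTensorMap_tmul,
      LinearMap.mul'_apply, hD, smul_add, mul_smul]
    rw [smul_comm u (MulOpposite.op b), add_comm]
  | add x y hx hy =>
    simp only [map_add, hx, hy, smul_add, add_smul]
    abel

lemma isOmegaLift_derivationTensorMap
    (hD : ∀ a b : A, D (a * b) = a • D b + MulOpposite.op b • D a) :
    IsOmegaLift k A M D
      (derivationTensorMap D ∘ₗ (LinearMap.ker (LinearMap.mul' k A)).subtype) := by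
  refine ⟨fun a x _ => derivationTensorMap_smul D a x, fun b x _ => ?_, fun a _ => ?_⟩
  · simp [derivationTensorMap_lTensor_mulRight D hD, LinearMap.mem_ker.mp x.2]
  · simp [map_one_eq_zero_of_leibniz D hD]

end KaehlerBimodule

namespace IsOmegaLift

open KaehlerBimodule

variable {k : Type*} [CommRing k] {A : Type*} [Ring A] [Algebra k A]
  {M : Type*} [AddCommGroup M] [Module k M] [Module A M] [IsScalarTower k A M] [Module Aᵐᵒᵖ M]
  {D : A →ₗ[k] M} {f : LinearMap.ker (LinearMap.mul' k A) →ₗ[k] M}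

lemma comp_kerMulProj (hf : IsOmegaLift k A M D f) :
    f ∘ₗ kerMulProj k A = derivationTensorMap D := by
  obtain ⟨hleft, -, hd⟩ := hf
  refine TensorProduct.ext' fun a b => ?_
  have hb : ((1 : A) ⊗ₜ[k] b - b ⊗ₜ[k] (1 : A)) ∈ LinearMap.ker (LinearMap.mul' k A) := by
    simp
  have hproj : kerMulProj k A (a ⊗ₜ[k] b) = ⟨a • ((1 : A) ⊗ₜ[k] b - b ⊗ₜ[k] (1 : A)),
      coe_kerMulProj_tmul (k := k) a b ▸ (kerMulProj k A (a ⊗ₜ[k] b)).2⟩ :=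
    Subtype.ext (coe_kerMulProj_tmul a b)
  rw [LinearMap.comp_apply, hproj, hleft a ⟨_, hb⟩, hd b hb, derivationTensorMap_tmul]

lemma apply_eq_derivationTensorMap (hf : IsOmegaLift k A M D f)
    (x : LinearMap.ker (LinearMap.mul' k A)) :
    f x = derivationTensorMap D x := by
  rw [← hf.comp_kerMulProj, LinearMap.comp_apply, kerMulProj_apply_of_mem x.2]

end IsOmegaLift

open KaehlerBimodule in
theorem stmt7_general (k : Type*) [CommRing k] (A : Type*) [Ring A] [Algebra k A]
    (M : Type*) [AddCommGroup M] [Module k M] [Module A M] [Module Aᵐᵒᵖ M]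
    [SMulCommClass A Aᵐᵒᵖ M] [IsScalarTower k A M]
    (D : A →ₗ[k] M)
    (hD : ∀ a b : A, D (a * b) = a • D b + MulOpposite.op b • D a) :
    (∃! f : (LinearMap.ker (LinearMap.mul' k A)) →ₗ[k] M, IsOmegaLift k A M D f) ∧
    (∀ f : (LinearMap.ker (LinearMap.mul' k A)) →ₗ[k] M, IsOmegaLift k A M D f →
      ∀ (ι : Type) (t : Finset ι) (u v : ι → A)
        (hx : (∑ i ∈ t, u i ⊗ₜ[k] v i) ∈ LinearMap.ker (LinearMap.mul' k A)),
        f ⟨∑ i ∈ t, u i ⊗ₜ[k] v i, hx⟩ = ∑ i ∈ t, u i • D (v i)) := by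
  refine ⟨⟨_, isOmegaLift_derivationTensorMap D hD, fun g hg => ?_⟩, fun f hf ι t u v hx => ?_⟩
  · ext x
    exact hg.apply_eq_derivationTensorMap x
  · simp [hf.apply_eq_derivationTensorMap]

/-- Universal property of `Ω¹(A/k) = ker μ`: every `(A,A)`-bimodule `k`-derivation
`D : A → M` factors uniquely through `d : a ↦ 1 ⊗ a − a ⊗ 1` via a map of bimodules
`f : ker μ → M`; moreover `f` is given by `Σ aᵢ ⊗ bᵢ ↦ Σ aᵢ • D bᵢ`. -/
theorem stmt7 (k : Type*) [CommRing k] (A : Type*) [Ring A] [Algebra k A]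
    (M : Type*) [AddCommGroup M] [Module k M] [Module A M] [Module Aᵐᵒᵖ M]
    [SMulCommClass A Aᵐᵒᵖ M] [IsScalarTower k A M] [IsScalarTower k Aᵐᵒᵖ M]
    (D : A →ₗ[k] M)
    (hD : ∀ a b : A, D (a * b) = a • D b + MulOpposite.op b • D a) :
    (∃! f : (LinearMap.ker (LinearMap.mul' k A)) →ₗ[k] M, IsOmegaLift k A M D f) ∧
    (∀ f : (LinearMap.ker (LinearMap.mul' k A)) →ₗ[k] M, IsOmegaLift k A M D f →
      ∀ (ι : Type) (t : Finset ι) (u v : ι → A)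
        (hx : (∑ i ∈ t, u i ⊗ₜ[k] v i) ∈ LinearMap.ker (LinearMap.mul' k A)),
        f ⟨∑ i ∈ t, u i ⊗ₜ[k] v i, hx⟩ = ∑ i ∈ t, u i • D (v i)) :=
  stmt7_general k A M D hD
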